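/- Let f be a formal power series and suppose (Q_{\mathbf{n}_1,0}, Q_{\mathbf{n}_1,1}, Q_{\mathbf{n}_1,2}) and (Q_{\mathbf{n}_2,0}, Q_{\mathbf{n}_2,1}, Q_{\mathbf{n}_2,2}) are two triples of polynomials satisfying Q_{\mathbf{n}_k,0} + Q_{\mathbf{n}_k,1} f + Q_{\mathbf{n}_k,2} f^2 = O(z^{3n+1}) for k = 1, 2, with all degrees at most n. Then the determinant polynomial P := Q_{\mathbf{n}_1,1} Q_{\mathbf{n}_2,2} - Q_{\mathbf{n}_2,1} Q_{\mathbf{n}_1,2} has degree at most 2n and satisfies: there exist polynomials P_1, P_2 of degree at most 2n with P f - P_1 = O(z^{3n+1}) and P f^2 - P_2 = O(z^{3n+1}). -/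

import Mathlib

/-!
Writing `R_A = A₀ + A₁ f + A₂ f²` and `R_B = B₀ + B₁ f + B₂ f²`, Cramer's rule for the
linear system in the unknowns `(1, f, f²)` gives `B₂ R_A - A₂ R_B = P f - (A₂ B₀ - B₂ A₀)` and
`A₁ R_B - B₁ R_A = P f² - (B₁ A₀ - A₁ B₀)`, where `P = A₁ B₂ - B₁ A₂`. Both right-hand sides are
therefore divisible by `X ^ (3n + 1)`, and all the polynomials involved are `2×2` minors of
degree at most `2n`.
-/

open Polynomial PowerSeries

namespace HermitePade

theorem natDegree_mul_sub_mul_le {R : Type*} [CommRing R] {p q r s : R[X]} {m n : ℕ}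
    (hp : p.natDegree ≤ m) (hq : q.natDegree ≤ n) (hr : r.natDegree ≤ m) (hs : s.natDegree ≤ n) :
    (p * q - r * s).natDegree ≤ m + n :=
  (natDegree_sub_le _ _).trans <|
    max_le (natDegree_mul_le_of_le hp hq) (natDegree_mul_le_of_le hr hs)

theorem X_pow_succ_dvd_iff {R : Type*} [Semiring R] {φ : R⟦X⟧} {m : ℕ} :
    (X : R⟦X⟧) ^ (m + 1) ∣ φ ↔ ∀ k ≤ m, coeff k φ = 0 := by
  simp only [PowerSeries.X_pow_dvd_iff, Nat.lt_succ_iff]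

section Cramer

variable {R : Type*} [CommRing R] (a₀ a₁ a₂ b₀ b₁ b₂ f : R)

theorem det_mul_sub_eq :
    (a₁ * b₂ - b₁ * a₂) * f - (a₂ * b₀ - b₂ * a₀) =
      b₂ * (a₀ + a₁ * f + a₂ * f ^ 2) - a₂ * (b₀ + b₁ * f + b₂ * f ^ 2) := by
  ring

theorem det_mul_sq_sub_eq :
    (a₁ * b₂ - b₁ * a₂) * f ^ 2 - (b₁ * a₀ - a₁ * b₀) =
      a₁ * (b₀ + b₁ * f + b₂ * f ^ 2) - b₁ * (a₀ + a₁ * f + a₂ * f ^ 2) := by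
  ring

end Cramer

end HermitePade

open HermitePade

/-- The 2×2 determinant of two type I Hermite–Padé systems for `[1, f, f²]` is a
type II Hermite–Padé denominator for the pair `(f, f²)`. -/
theorem hermitePade_det_typeII (f : PowerSeries ℂ) (n : ℕ)
    (A₀ A₁ A₂ B₀ B₁ B₂ : Polynomial ℂ)
    (hA₀ : A₀.natDegree ≤ n) (hA₁ : A₁.natDegree ≤ n) (hA₂ : A₂.natDegree ≤ n)
    (hB₀ : B₀.natDegree ≤ n) (hB₁ : B₁.natDegree ≤ n) (hB₂ : B₂.natDegree ≤ n)
    (hA : ∀ k ≤ 3 * n,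
      PowerSeries.coeff k
        ((A₀ : PowerSeries ℂ) + (A₁ : PowerSeries ℂ) * f + (A₂ : PowerSeries ℂ) * f ^ 2) = 0)
    (hB : ∀ k ≤ 3 * n,
      PowerSeries.coeff k
        ((B₀ : PowerSeries ℂ) + (B₁ : PowerSeries ℂ) * f + (B₂ : PowerSeries ℂ) * f ^ 2) = 0) :
    (A₁ * B₂ - B₁ * A₂).natDegree ≤ 2 * n ∧
    ∃ P₁ P₂ : Polynomial ℂ, P₁.natDegree ≤ 2 * n ∧ P₂.natDegree ≤ 2 * n ∧
      ∀ k ≤ 3 * n,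
        PowerSeries.coeff k
          (((A₁ * B₂ - B₁ * A₂ : Polynomial ℂ) : PowerSeries ℂ) * f - (P₁ : PowerSeries ℂ)) = 0 ∧
        PowerSeries.coeff k
          (((A₁ * B₂ - B₁ * A₂ : Polynomial ℂ) : PowerSeries ℂ) * f ^ 2 - (P₂ : PowerSeries ℂ)) = 0 := by
  rw [← X_pow_succ_dvd_iff] at hA hB
  rw [two_mul]
  refine ⟨natDegree_mul_sub_mul_le hA₁ hB₂ hB₁ hA₂, A₂ * B₀ - B₂ * A₀, B₁ * A₀ - A₁ * B₀,
    natDegree_mul_sub_mul_le hA₂ hB₀ hB₂ hA₀, natDegree_mul_sub_mul_le hB₁ hA₀ hA₁ hB₀, ?_⟩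
  have hf : (X : ℂ⟦X⟧) ^ (3 * n + 1) ∣ ((A₁ * B₂ - B₁ * A₂ : ℂ[X]) : ℂ⟦X⟧) * f -
      ((A₂ * B₀ - B₂ * A₀ : ℂ[X]) : ℂ⟦X⟧) := by
    push_cast
    rw [det_mul_sub_eq]
    exact dvd_sub (dvd_mul_of_dvd_right hA _) (dvd_mul_of_dvd_right hB _)
  have hf2 : (X : ℂ⟦X⟧) ^ (3 * n + 1) ∣ ((A₁ * B₂ - B₁ * A₂ : ℂ[X]) : ℂ⟦X⟧) * f ^ 2 -
      ((B₁ * A₀ - A₁ * B₀ : ℂ[X]) : ℂ⟦X⟧) := by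
    push_cast
    rw [det_mul_sq_sub_eq]
    exact dvd_sub (dvd_mul_of_dvd_right hB _) (dvd_mul_of_dvd_right hA _)
  exact fun k hk => ⟨X_pow_succ_dvd_iff.1 hf k hk, X_pow_succ_dvd_iff.1 hf2 k hk⟩
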